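/- Let n ≥ 1, let q > 0 with q ≠ 1, and let Φ : Matrix (Fin n) ℂ →ₗ[ℂ] Matrix (Fin n) ℂ be a positive trace-preserving linear map. Then Φ is unital (Φ 1 = 1) if and only if Φ does not decrease the Tsallis entropy of parameter q, i.e. T_q(Φ ρ) ≥ T_q(ρ) for every density matrix ρ, where T_q(ρ) = ((∑_k λ_k(ρ)^q) − 1)/(1 − q) and λ_k(ρ) are the eigenvalues of ρ (real powers taken via rpow). -/

import Mathlib

open scoped Matrix ComplexOrder

/-- A density matrix: positive semidefinite with unit trace. -/
def IsDensityMatrix {n : ℕ} (ρ : Matrix (Fin n) (Fin n) ℂ) : Prop :=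
  ρ.PosSemidef ∧ ρ.trace = 1

/-- The (real) eigenvalues of a matrix, via its Hermitian spectral decomposition
(junk value `0` if the matrix is not Hermitian). -/
noncomputable def eigs {n : ℕ} (A : Matrix (Fin n) (Fin n) ℂ) : Fin n → ℝ :=
  if h : A.IsHermitian then h.eigenvalues else 0

/-- A linear map on matrices is positive if it preserves positive semidefiniteness. -/
def IsPositiveMap {n : ℕ}
    (Φ : Matrix (Fin n) (Fin n) ℂ →ₗ[ℂ] Matrix (Fin n) (Fin n) ℂ) : Prop :=
  ∀ A : Matrix (Fin n) (Fin n) ℂ, A.PosSemidef → (Φ A).PosSemidef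

/-- A linear map on matrices is trace-preserving if it preserves the trace. -/
def IsTracePreserving {n : ℕ}
    (Φ : Matrix (Fin n) (Fin n) ℂ →ₗ[ℂ] Matrix (Fin n) (Fin n) ℂ) : Prop :=
  ∀ A : Matrix (Fin n) (Fin n) ℂ, (Φ A).trace = A.trace


/-- The Tsallis entropy of parameter `q`: `T_q(ρ) = ((∑ λ_k^q) - 1) / (1 - q)`. -/
noncomputable def tsallisEntropy {n : ℕ} (q : ℝ) (A : Matrix (Fin n) (Fin n) ℂ) : ℝ :=
  ((∑ k, eigs A k ^ q) - 1) / (1 - q)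

/-!
If `Φ` is unital, let `P_j` be the eigenprojections of `ρ` and `w_i` the eigenvectors of `Φ ρ`.
Then `B i j = ⟨w_i, Φ(P_j) w_i⟩` is doubly stochastic: its entries are nonnegative by positivity,
its rows sum to `1` because `Φ 1 = 1` and its columns because `Φ` preserves traces; and it maps
the spectrum of `ρ` to that of `Φ ρ`. Since the spectrum of a density matrix sums to `1`,
`T_q(ρ) = ∑ g_q(λ_k)` with `g_q(x) = (x^q - x)/(1 - q)`, which is strictly concave on `[0, ∞)`
for every `q > 0`, `q ≠ 1`; Jensen's inequality along the rows of `B` gives `T_q(ρ) ≤ T_q(Φ ρ)`.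

Conversely, by the equality case of Jensen's inequality the maximally mixed state `1/n` is the
unique maximiser of `T_q`, so `T_q(1/n) ≤ T_q(Φ(1/n))` forces `Φ(1/n) = 1/n`, that is, `Φ 1 = 1`.
-/

open Matrix Finset

namespace Matrix

variable {𝕜 ι : Type*} [RCLike 𝕜] [Fintype ι] [DecidableEq ι]

lemma trace_conjStarAlgAut (U : unitaryGroup ι 𝕜) (M : Matrix ι ι 𝕜) :
    (Unitary.conjStarAlgAut 𝕜 _ U M).trace = M.trace := by
  rw [Unitary.conjStarAlgAut_apply, trace_mul_cycle, Unitary.coe_star_mul_self, one_mul]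

lemma PosSemidef.conjStarAlgAut {M : Matrix ι ι 𝕜} (hM : M.PosSemidef) (U : unitaryGroup ι 𝕜) :
    (Unitary.conjStarAlgAut 𝕜 _ U M).PosSemidef := by
  simpa [Unitary.conjStarAlgAut_apply, star_eq_conjTranspose] using
    hM.mul_mul_conjTranspose_same (U : Matrix ι ι 𝕜)

namespace IsHermitian

variable {A : Matrix ι ι 𝕜} (hA : A.IsHermitian)

noncomputable def eigenprojection (j : ι) : Matrix ι ι 𝕜 :=
  Unitary.conjStarAlgAut 𝕜 _ hA.eigenvectorUnitary (single j j 1)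

lemma sum_eigenprojection : ∑ j, hA.eigenprojection j = 1 := by
  simp only [eigenprojection, ← map_sum, sum_single_one, map_one]

lemma sum_eigenvalues_smul_eigenprojection :
    ∑ j, (hA.eigenvalues j : 𝕜) • hA.eigenprojection j = A := by
  conv_rhs => rw [hA.spectral_theorem, ← sum_single_eq_diagonal]
  simp only [eigenprojection, ← map_smul, ← map_sum, smul_single, smul_eq_mul, mul_one,
    Function.comp_apply]

lemma posSemidef_eigenprojection (j : ι) : (hA.eigenprojection j).PosSemidef := by
  refine PosSemidef.conjStarAlgAut ?_ _
  rw [← diagonal_single]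
  exact PosSemidef.diagonal fun i => by by_cases h : i = j <;> simp [h]

lemma trace_eigenprojection (j : ι) : (hA.eigenprojection j).trace = 1 := by
  rw [eigenprojection, trace_conjStarAlgAut, trace_single_eq_same]

lemma eq_algebraMap_of_eigenvalues_eq {c : ℝ} (hc : ∀ i, hA.eigenvalues i = c) :
    A = algebraMap ℝ _ c := by
  have hspec : Set.EqOn id (fun _ => c) (spectrum ℝ A) := by
    rw [hA.spectrum_real_eq_range_eigenvalues]
    rintro _ ⟨i, rfl⟩
    exact hc i
  rw [← cfc_const c A, ← cfc_congr hspec, cfc_id ℝ A]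

lemma eigenvalues_algebraMap [Nonempty ι] {c : ℝ}
    (hc : (algebraMap ℝ (Matrix ι ι 𝕜) c).IsHermitian) (i : ι) : hc.eigenvalues i = c := by
  simpa [spectrum.scalar_eq] using hc.eigenvalues_mem_spectrum_real i

end IsHermitian

end Matrix

section Jensen

variable {ι : Type*} [Fintype ι]

lemma StrictConcaveOn.div_const {s : Set ℝ} {f : ℝ → ℝ} (hf : StrictConcaveOn ℝ s f) {c : ℝ}
    (hc : 0 < c) : StrictConcaveOn ℝ s fun x => f x / c :=
  ⟨hf.1, fun _ hx _ hy hxy _ _ ha hb hab => by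
    simpa only [smul_eq_mul, mul_div_assoc, add_div] using
      div_lt_div_of_pos_right (hf.2 hx hy hxy ha hb hab) hc⟩

lemma ConcaveOn.sum_le_sum_map_mulVec [DecidableEq ι] {s : Set ℝ} {f : ℝ → ℝ}
    (hf : ConcaveOn ℝ s f) {B : Matrix ι ι ℝ} (hB : B ∈ doublyStochastic ℝ ι) {x : ι → ℝ}
    (hx : ∀ i, x i ∈ s) : ∑ i, f (x i) ≤ ∑ i, f ((B *ᵥ x) i) :=
  calc ∑ j, f (x j) = ∑ j, (∑ i, B i j) * f (x j) := by
        simp only [sum_col_of_mem_doublyStochastic hB, one_mul]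
    _ = ∑ i, ∑ j, B i j • f (x j) := by
        simp only [sum_mul, smul_eq_mul]; exact sum_comm
    _ ≤ ∑ i, f (∑ j, B i j • x j) := sum_le_sum fun i _ =>
        hf.le_map_sum (fun j _ => nonneg_of_mem_doublyStochastic hB)
          (sum_row_of_mem_doublyStochastic hB i) fun j _ => hx j
    _ = ∑ i, f ((B *ᵥ x) i) := rfl

lemma StrictConcaveOn.eq_inv_card_of_card_mul_le_sum [Nonempty ι] {s : Set ℝ} {f : ℝ → ℝ}
    (hf : StrictConcaveOn ℝ s f) {μ : ι → ℝ} (hμ : ∀ i, μ i ∈ s) (hsum : ∑ i, μ i = 1)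
    (hle : Fintype.card ι * f (Fintype.card ι : ℝ)⁻¹ ≤ ∑ i, f (μ i)) (i : ι) :
    μ i = (Fintype.card ι : ℝ)⁻¹ := by
  have hcard : (0 : ℝ) < Fintype.card ι := by exact_mod_cast Fintype.card_pos
  have hjensen :
      f (∑ j, (Fintype.card ι : ℝ)⁻¹ • μ j) ≤ ∑ j, (Fintype.card ι : ℝ)⁻¹ • f (μ j) := by
    simp only [smul_eq_mul, ← mul_sum, hsum, mul_one]
    rwa [← mul_le_mul_iff_right₀ hcard, ← mul_assoc, mul_inv_cancel₀ hcard.ne', one_mul]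
  have hconst : ∀ j, μ j = μ i := fun j =>
    hf.eq_of_map_sum_eq (fun _ _ => inv_pos.2 hcard) (by simp [card_univ, hcard.ne'])
      (fun j _ => hμ j) hjensen (mem_univ j) (mem_univ i)
  rw [sum_congr rfl fun j _ => hconst j, sum_const, card_univ, nsmul_eq_mul] at hsum
  exact eq_inv_of_mul_eq_one_right hsum

end Jensen

noncomputable def tsallisTerm (q x : ℝ) : ℝ := (x ^ q - x) / (1 - q)

lemma strictConcaveOn_tsallisTerm {q : ℝ} (hq0 : 0 < q) (hq1 : q ≠ 1) :
    StrictConcaveOn ℝ (Set.Ici 0) (tsallisTerm q) := by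
  rcases hq1.lt_or_gt with hq | hq
  · exact ((Real.strictConcaveOn_rpow hq0 hq).sub_convexOn (convexOn_id (convex_Ici 0))).div_const
      (sub_pos.2 hq)
  · have hterm : tsallisTerm q = fun x => (x - x ^ q) / (q - 1) := by
      funext x; rw [tsallisTerm, ← neg_sub x, ← neg_sub q, neg_div_neg_eq]
    rw [hterm]
    exact ((concaveOn_id (convex_Ici 0)).sub_strictConvexOn (strictConvexOn_rpow hq)).div_const
      (sub_pos.2 hq)

section Density

variable {n : ℕ}

lemma eigs_of_isHermitian {A : Matrix (Fin n) (Fin n) ℂ} (hA : A.IsHermitian) :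
    eigs A = hA.eigenvalues :=
  dif_pos hA

namespace IsDensityMatrix

variable {ρ : Matrix (Fin n) (Fin n) ℂ} (hρ : IsDensityMatrix ρ)
include hρ

lemma eigs_nonneg (k : Fin n) : 0 ≤ eigs ρ k := by
  rw [eigs_of_isHermitian hρ.1.1]
  exact hρ.1.eigenvalues_nonneg k

lemma sum_eigs : ∑ k, eigs ρ k = 1 := by
  rw [eigs_of_isHermitian hρ.1.1, ← Complex.ofReal_inj, Complex.ofReal_sum, Complex.ofReal_one]
  exact hρ.1.1.trace_eq_sum_eigenvalues.symm.trans hρ.2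

lemma tsallisEntropy_eq_sum_tsallisTerm (q : ℝ) :
    tsallisEntropy q ρ = ∑ k, tsallisTerm q (eigs ρ k) := by
  simp only [tsallisEntropy, tsallisTerm, ← sum_div, sum_sub_distrib, hρ.sum_eigs]

end IsDensityMatrix

namespace IsPositiveMap

variable {Φ : Matrix (Fin n) (Fin n) ℂ →ₗ[ℂ] Matrix (Fin n) (Fin n) ℂ} (hpos : IsPositiveMap Φ)
include hpos

lemma isDensityMatrix_map (htp : IsTracePreserving Φ) {ρ : Matrix (Fin n) (Fin n) ℂ}
    (hρ : IsDensityMatrix ρ) : IsDensityMatrix (Φ ρ) :=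
  ⟨hpos ρ hρ.1, (htp ρ).trans hρ.2⟩

lemma exists_doublyStochastic_eigs_map (htp : IsTracePreserving Φ) (hu : Φ 1 = 1)
    {ρ : Matrix (Fin n) (Fin n) ℂ} (hρ : ρ.PosSemidef) :
    ∃ B ∈ doublyStochastic ℝ (Fin n), eigs (Φ ρ) = B *ᵥ eigs ρ := by
  have hH := hρ.1
  have hσ : (Φ ρ).IsHermitian := (hpos ρ hρ).1
  set C := Unitary.conjStarAlgAut ℂ (Matrix (Fin n) (Fin n) ℂ) (star hσ.eigenvectorUnitary)
  have hdiag : C (Φ ρ) = Matrix.diagonal (RCLike.ofReal ∘ hσ.eigenvalues) :=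
    hσ.conjStarAlgAut_star_eigenvectorUnitary
  refine ⟨of fun i j => (C (Φ (hH.eigenprojection j)) i i).re,
    mem_doublyStochastic_iff_sum.2 ⟨fun i j => ?_, fun i => ?_, fun j => ?_⟩, ?_⟩
  · exact (RCLike.nonneg_iff.mp
      ((hpos _ (hH.posSemidef_eigenprojection j)).conjStarAlgAut _).diag_nonneg).1
  · have hrow : ∑ j, C (Φ (hH.eigenprojection j)) = 1 := by
      rw [← map_sum, ← map_sum, hH.sum_eigenprojection, hu, map_one]
    simpa [← Complex.re_sum, ← Matrix.sum_apply] using congr_arg (fun M => (M i i).re) hrow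
  · have hcol : (C (Φ (hH.eigenprojection j))).trace = 1 := by
      rw [trace_conjStarAlgAut, htp, hH.trace_eigenprojection]
    simpa [trace, ← Complex.re_sum] using congr_arg Complex.re hcol
  · have hmix := congr_arg (fun M => C (Φ M)) hH.sum_eigenvalues_smul_eigenprojection.symm
    simp only [map_sum, map_smul] at hmix
    ext i
    simpa [eigs_of_isHermitian, hH, hσ, mulVec, dotProduct, Complex.re_sum, Matrix.sum_apply,
      Complex.re_ofReal_mul, mul_comm] using congr_arg (fun M => (M i i).re) (hdiag.symm.trans hmix)

lemma tsallisEntropy_le_map (htp : IsTracePreserving Φ) (hu : Φ 1 = 1) {q : ℝ} (hq0 : 0 < q)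
    (hq1 : q ≠ 1) {ρ : Matrix (Fin n) (Fin n) ℂ} (hρ : IsDensityMatrix ρ) :
    tsallisEntropy q ρ ≤ tsallisEntropy q (Φ ρ) := by
  obtain ⟨B, hB, hBρ⟩ := hpos.exists_doublyStochastic_eigs_map htp hu hρ.1
  rw [hρ.tsallisEntropy_eq_sum_tsallisTerm,
    (hpos.isDensityMatrix_map htp hρ).tsallisEntropy_eq_sum_tsallisTerm, hBρ]
  exact (strictConcaveOn_tsallisTerm hq0 hq1).concaveOn.sum_le_sum_map_mulVec hB hρ.eigs_nonneg

end IsPositiveMap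

noncomputable def maximallyMixed (n : ℕ) : Matrix (Fin n) (Fin n) ℂ :=
  algebraMap ℝ _ (n : ℝ)⁻¹

lemma natCast_smul_maximallyMixed (hn : n ≠ 0) : (n : ℝ) • maximallyMixed n = 1 := by
  rw [maximallyMixed, Algebra.smul_def, ← map_mul, mul_inv_cancel₀ (Nat.cast_ne_zero.2 hn),
    map_one]

lemma isDensityMatrix_maximallyMixed [NeZero n] : IsDensityMatrix (maximallyMixed n) := by
  refine ⟨?_, ?_⟩
  · rw [maximallyMixed, Algebra.algebraMap_eq_smul_one]
    exact PosSemidef.one.smul (by positivity)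
  · rw [maximallyMixed, Algebra.algebraMap_eq_smul_one, trace_smul, trace_one, Fintype.card_fin]
    simp [NeZero.ne n]

lemma tsallisEntropy_maximallyMixed [NeZero n] (q : ℝ) :
    tsallisEntropy q (maximallyMixed n) = n * tsallisTerm q (n : ℝ)⁻¹ := by
  rw [isDensityMatrix_maximallyMixed.tsallisEntropy_eq_sum_tsallisTerm,
    eigs_of_isHermitian isDensityMatrix_maximallyMixed.1.1]
  simp [maximallyMixed, IsHermitian.eigenvalues_algebraMap]

lemma IsDensityMatrix.eq_maximallyMixed_of_tsallisEntropy_le [NeZero n] {q : ℝ} (hq0 : 0 < q)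
    (hq1 : q ≠ 1) {σ : Matrix (Fin n) (Fin n) ℂ} (hσ : IsDensityMatrix σ)
    (h : tsallisEntropy q (maximallyMixed n) ≤ tsallisEntropy q σ) : σ = maximallyMixed n := by
  rw [tsallisEntropy_maximallyMixed, hσ.tsallisEntropy_eq_sum_tsallisTerm] at h
  have huniform := (strictConcaveOn_tsallisTerm hq0 hq1).eq_inv_card_of_card_mul_le_sum
    hσ.eigs_nonneg hσ.sum_eigs (by simpa using h)
  rw [eigs_of_isHermitian hσ.1.1, Fintype.card_fin] at huniform
  exact hσ.1.1.eq_algebraMap_of_eigenvalues_eq huniform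

end Density

theorem unital_iff_tsallisEntropy_nondecreasing_general {n : ℕ}
    {q : ℝ} (hq0 : 0 < q) (hq1 : q ≠ 1)
    (Φ : Matrix (Fin n) (Fin n) ℂ →ₗ[ℂ] Matrix (Fin n) (Fin n) ℂ)
    (hpos : IsPositiveMap Φ) (htp : IsTracePreserving Φ) :
    Φ 1 = 1 ↔
      ∀ ρ : Matrix (Fin n) (Fin n) ℂ, IsDensityMatrix ρ →
        tsallisEntropy q ρ ≤ tsallisEntropy q (Φ ρ) := by
  refine ⟨fun hu ρ hρ => hpos.tsallisEntropy_le_map htp hu hq0 hq1 hρ, fun h => ?_⟩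
  rcases eq_or_ne n 0 with rfl | hn
  · ext i
    exact i.elim0
  have : NeZero n := ⟨hn⟩
  have hmixed := isDensityMatrix_maximallyMixed (n := n)
  have hfix : Φ (maximallyMixed n) = maximallyMixed n :=
    (hpos.isDensityMatrix_map htp hmixed).eq_maximallyMixed_of_tsallisEntropy_le hq0 hq1
      (h _ hmixed)
  rw [← natCast_smul_maximallyMixed hn, LinearMap.map_smul_of_tower, hfix]

/-- A positive trace-preserving linear map `Φ` is unital iff it does not
decrease the Tsallis entropy of parameter `q` (`0 < q ≠ 1`) on density matrices. -/
theorem unital_iff_tsallisEntropy_nondecreasing {n : ℕ} (hn : 1 ≤ n)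
    {q : ℝ} (hq0 : 0 < q) (hq1 : q ≠ 1)
    (Φ : Matrix (Fin n) (Fin n) ℂ →ₗ[ℂ] Matrix (Fin n) (Fin n) ℂ)
    (hpos : IsPositiveMap Φ) (htp : IsTracePreserving Φ) :
    Φ 1 = 1 ↔
      ∀ ρ : Matrix (Fin n) (Fin n) ℂ, IsDensityMatrix ρ →
        tsallisEntropy q ρ ≤ tsallisEntropy q (Φ ρ) :=
  unital_iff_tsallisEntropy_nondecreasing_general hq0 hq1 Φ hpos htp
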